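/- arXiv:2111.02824 — 2 statements merged into one kernel-verified Lean document; each statement's English description precedes it below -/
import Mathlib

section
/- If in the self-composition CC(S) of an LFSA S there exists a run q0' →s1' q1' →s2' q1' →s3' q2' with q0' initial, ℓ(s2') of positive length, and q2'(L) ≠ q2'(R), then for every positive integer k the event sequence s = s1'(L)(s2'(L))^{k+1} s3'(L) belongs to L(S), satisfies |ℓ(s)| > k, and |M(S, ℓ(s))| > 1. -/
/-- A labeled finite-state automaton (LFSA): transition relation `δ`,
initial states `Q0`, labeling `lab` (where `none` stands for ε, i.e. unobservable). -/
structure LFSA (Q : Type*) (E : Type*) (A : Type*) where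
  δ : Q → E → Q → Prop
  Q0 : Set Q
  lab : E → Option A

namespace LFSA

variable {Q Q1 Q2 E A : Type*}

/-- A run `q →s q'` over a finite event sequence. -/
inductive Run (S : LFSA Q E A) : Q → List E → Q → Prop
  | nil (q : Q) : Run S q [] q
  | cons {q q' q'' : Q} {e : E} {s : List E} :
      S.δ q e q' → Run S q' s q'' → Run S q (e :: s) q''

/-- Output (label sequence) of an event sequence. -/
def out (S : LFSA Q E A) (s : List E) : List A := s.filterMap S.lab

/-- Generated finite language. -/
def L (S : LFSA Q E A) : Set (List E) := {s | ∃ q0 ∈ S.Q0, ∃ q, S.Run q0 s q}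

/-- Current-state estimate after observing `σ`. -/
def M (S : LFSA Q E A) (σ : List A) : Set Q :=
  {q | ∃ q0 ∈ S.Q0, ∃ s : List E, S.out s = σ ∧ S.Run q0 s q}

/-- Reachability via a nonempty event sequence. -/
def ReachPlus (S : LFSA Q E A) (q q' : Q) : Prop := ∃ s : List E, s ≠ [] ∧ S.Run q s q'

/-- There is a transition cycle reachable from `q` (a cycle at `q` itself counts). -/
def CycleReachableFrom (S : LFSA Q E A) (q : Q) : Prop :=
  ∃ p : Q, (p = q ∨ S.ReachPlus q p) ∧ ∃ s : List E, s ≠ [] ∧ S.Run p s p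

/-- `*`-strong detectability. -/
def StarSD (S : LFSA Q E A) : Prop :=
  ∃ k : ℕ, 0 < k ∧ ∀ s ∈ S.L, ∀ σ : List A, σ <+: S.out s → k < σ.length →
    ∃ q : Q, S.M σ = {q}

/-- ω-strong detectability. -/
def OmegaSD (S : LFSA Q E A) : Prop :=
  ∃ k : ℕ, 0 < k ∧ ∀ (s : ℕ → E) (ρ : ℕ → Q), ρ 0 ∈ S.Q0 →
    (∀ n : ℕ, S.δ (ρ n) (s n) (ρ (n + 1))) →
    ∀ (n : ℕ) (σ : List A), σ <+: S.out (List.ofFn (fun i : Fin n => s i)) →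
      k < σ.length → ∃ q : Q, S.M σ = {q}

/-- Concurrent composition: observable transitions with equal labels synchronize,
unobservable transitions interleave. Events are pairs over `Option E` (`none` = ε). -/
def CC (S1 : LFSA Q1 E A) (S2 : LFSA Q2 E A) :
    LFSA (Q1 × Q2) (Option E × Option E) A where
  δ p ev p' :=
    match ev with
    | (some e, some e') =>
        (∃ a : A, S1.lab e = some a ∧ S2.lab e' = some a) ∧
          S1.δ p.1 e p'.1 ∧ S2.δ p.2 e' p'.2
    | (some e, none) => S1.lab e = none ∧ S1.δ p.1 e p'.1 ∧ p.2 = p'.2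
    | (none, some e') => S2.lab e' = none ∧ p.1 = p'.1 ∧ S2.δ p.2 e' p'.2
    | (none, none) => False
  Q0 := {p | p.1 ∈ S1.Q0 ∧ p.2 ∈ S2.Q0}
  lab ev := ev.1.bind S1.lab

/-- Left projection of an event sequence of a concurrent composition. -/
def lproj (s : List (Option E × Option E)) : List E := s.filterMap Prod.fst

/-- Right projection of an event sequence of a concurrent composition. -/
def rproj (s : List (Option E × Option E)) : List E := s.filterMap Prod.snd

/-- Unobservable reach of a set of states. -/
def UR (S : LFSA Q E A) (X : Set Q) : Set Q :=
  {q | ∃ q0 ∈ X, ∃ s : List E, S.out s = [] ∧ S.Run q0 s q}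

/-- One step of the observer (powerset construction). -/
def obsStep (S : LFSA Q E A) (x : Set Q) (a : A) : Set Q :=
  {q' | ∃ q ∈ x, ∃ (e : E) (p : Q), S.lab e = some a ∧ S.δ q e p ∧ q' ∈ S.UR {p}}

/-- Observer run (deterministic). -/
def obsRun (S : LFSA Q E A) (x : Set Q) (σ : List A) : Set Q := σ.foldl S.obsStep x

/-- The concurrent composition `CC(S_ε, Obs^ε)` of `S` (with events relabeled by their
labels) and a deterministic observer with step function `ostep` and initial state `x0`:
observable transitions move both components, unobservable ones move only the left one. -/
def CCObs (S : LFSA Q E A) (ostep : Set Q → A → Set Q) (x0 : Set Q) :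
    LFSA (Q × Set Q) E A where
  δ p e p' := S.δ p.1 e p'.1 ∧
    (∀ a : A, S.lab e = some a → p'.2 = ostep p.2 a) ∧
    (S.lab e = none → p'.2 = p.2)
  Q0 := {p | p.1 ∈ S.Q0 ∧ p.2 = x0}
  lab := S.lab

/-- A state is reachable if it is an initial state or reachable from one. -/
def Reachable (S : LFSA Q E A) (q : Q) : Prop := ∃ q0 ∈ S.Q0, ∃ s : List E, S.Run q0 s q

/-- Restriction of an automaton to a set of allowed states. -/
def restrict (S : LFSA Q E A) (P : Set Q) : LFSA Q E A where
  δ q e q' := S.δ q e q' ∧ q ∈ P ∧ q' ∈ P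
  Q0 := S.Q0 ∩ P
  lab := S.lab

/-- A run all of whose states (including endpoints) lie in `P`. -/
inductive RunIn (S : LFSA Q E A) (P : Set Q) : Q → List E → Q → Prop
  | nil (q : Q) : q ∈ P → RunIn S P q [] q
  | cons {q q' q'' : Q} {e : E} {s : List E} :
      q ∈ P → S.δ q e q' → RunIn S P q' s q'' → RunIn S P q (e :: s) q''

/-- Normal subautomaton: all faulty transitions removed. -/
def Sn (S : LFSA Q E A) (Ef : Set E) : LFSA Q E A where
  δ q e q' := S.δ q e q' ∧ e ∉ Ef
  Q0 := S.Q0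
  lab := S.lab

/-- Faulty subautomaton: faulty transitions together with all their
predecessor and successor transitions. -/
def Sf (S : LFSA Q E A) (Ef : Set E) : LFSA Q E A where
  δ q e q' := S.δ q e q' ∧ ∃ c f d, f ∈ Ef ∧ S.δ c f d ∧
      ((q = c ∧ e = f ∧ q' = d) ∨ (c = q' ∨ S.ReachPlus q' c) ∨ (q = d ∨ S.ReachPlus d q))
  Q0 := S.Q0
  lab := S.lab

/-- `s` ends with a faulty event. -/
def EndsFaulty (Ef : Set E) (s : List E) : Prop := ∃ (t : List E) (e : E), e ∈ Ef ∧ s = t ++ [e]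

/-- `E_f`-diagnosability. -/
def Diag (S : LFSA Q E A) (Ef : Set E) : Prop :=
  ∃ k : ℕ, ∀ s ∈ S.L, EndsFaulty Ef s → ∀ s' : List E, s ++ s' ∈ S.L → k < s'.length →
    ∀ s'' ∈ S.L, S.out s'' = S.out (s ++ s') → ∃ e ∈ Ef, e ∈ s''

/-- `E_f`-predictability. -/
def Pred (S : LFSA Q E A) (Ef : Set E) : Prop :=
  ∃ k : ℕ, ∀ s ∈ S.L, EndsFaulty Ef s →
    ∃ s' : List E, s' <+: s ∧ (∀ e ∈ s', e ∉ Ef) ∧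
      ∀ u v : List E, u ++ v ∈ S.L → S.out s' = S.out u → (∀ e ∈ u, e ∉ Ef) →
        k < v.length → ∃ e ∈ Ef, e ∈ v

/-- Current-state opacity. -/
def CSO (S : LFSA Q E A) (QS : Set Q) : Prop :=
  ∀ q0 ∈ S.Q0, ∀ (s : List E) (q : Q), S.Run q0 s q → q ∈ QS →
    ∃ q0' ∈ S.Q0, ∃ (s' : List E) (q' : Q), S.Run q0' s' q' ∧ q' ∉ QS ∧ S.out s = S.out s'

/-- Initial-state opacity. -/
def ISO (S : LFSA Q E A) (QS : Set Q) : Prop :=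
  ∀ q0 ∈ S.Q0 ∩ QS, ∀ (s : List E) (q : Q), S.Run q0 s q →
    ∃ q0' ∈ S.Q0 \ QS, ∃ (s' : List E) (q' : Q), S.Run q0' s' q' ∧ S.out s = S.out s'

/-- Infinite-step opacity. -/
def InfSO (S : LFSA Q E A) (QS : Set Q) : Prop :=
  ∀ q0 ∈ S.Q0, ∀ (s1 : List E) (q1 : Q) (s2 : List E) (q2 : Q),
    S.Run q0 s1 q1 → S.Run q1 s2 q2 → q1 ∈ QS →
    ∃ q0' ∈ S.Q0, ∃ (s1' : List E) (q1' : Q) (s2' : List E) (q2' : Q),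
      S.Run q0' s1' q1' ∧ S.Run q1' s2' q2' ∧ q1' ∉ QS ∧
        S.out s1 = S.out s1' ∧ S.out s2 = S.out s2'

/-- `K`-step opacity. -/
def KSO (S : LFSA Q E A) (QS : Set Q) (K : ℕ) : Prop :=
  ∀ q0 ∈ S.Q0, ∀ (s1 : List E) (q1 : Q) (s2 : List E) (q2 : Q),
    S.Run q0 s1 q1 → S.Run q1 s2 q2 → q1 ∈ QS → (S.out s2).length ≤ K →
    ∃ q0' ∈ S.Q0, ∃ (s1' : List E) (q1' : Q) (s2' : List E) (q2' : Q),
      S.Run q0' s1' q1' ∧ S.Run q1' s2' q2' ∧ q1' ∉ QS ∧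
        S.out s1 = S.out s1' ∧ S.out s2 = S.out s2'

/-- Strong current-state opacity: the matching run is entirely non-secret. -/
def SCSO (S : LFSA Q E A) (QS : Set Q) : Prop :=
  ∀ q0 ∈ S.Q0, ∀ (s : List E) (q : Q), S.Run q0 s q → q ∈ QS →
    ∃ q0' ∈ S.Q0, ∃ (s' : List E) (q' : Q), S.RunIn QSᶜ q0' s' q' ∧ S.out s = S.out s'

/-- Strong initial-state opacity. -/
def SISO (S : LFSA Q E A) (QS : Set Q) : Prop :=
  ∀ q0 ∈ S.Q0 ∩ QS, ∀ (s : List E) (q : Q), S.Run q0 s q →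
    ∃ q0' ∈ S.Q0 \ QS, ∃ (s' : List E) (q' : Q), S.RunIn QSᶜ q0' s' q' ∧ S.out s = S.out s'

/-- Strong infinite-step opacity. -/
def SInfSO (S : LFSA Q E A) (QS : Set Q) : Prop :=
  ∀ q0 ∈ S.Q0, ∀ (s1 : List E) (q1 : Q) (s2 : List E) (q2 : Q),
    S.Run q0 s1 q1 → S.Run q1 s2 q2 → q1 ∈ QS →
    ∃ q0' ∈ S.Q0, ∃ (s1' : List E) (q1' : Q) (s2' : List E) (q2' : Q),
      S.RunIn QSᶜ q0' s1' q1' ∧ S.RunIn QSᶜ q1' s2' q2' ∧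
        S.out s1 = S.out s1' ∧ S.out s2 = S.out s2'

/-- Strong `K`-step opacity. -/
def SKSO (S : LFSA Q E A) (QS : Set Q) (K : ℕ) : Prop :=
  ∀ q0 ∈ S.Q0, ∀ (s1 : List E) (q1 : Q) (s2 : List E) (q2 : Q),
    S.Run q0 s1 q1 → S.Run q1 s2 q2 → q1 ∈ QS → (S.out s2).length ≤ K →
    ∃ q0' ∈ S.Q0, ∃ (s1' : List E) (q1' : Q) (s2' : List E) (q2' : Q),
      S.RunIn QSᶜ q0' s1' q1' ∧ S.RunIn QSᶜ q1' s2' q2' ∧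
        S.out s1 = S.out s1' ∧ S.out s2 = S.out s2'

/-- Observer step of the secret-deleted subautomaton `S_dss`. -/
def dssObsStep (S : LFSA Q E A) (QS : Set Q) : Set Q → A → Set Q :=
  (S.restrict QSᶜ).obsStep

/-- Initial observer state of the secret-deleted subautomaton. -/
def dssInit (S : LFSA Q E A) (QS : Set Q) : Set Q :=
  (S.restrict QSᶜ).UR (S.restrict QSᶜ).Q0

end LFSA

/-!
Pump the synchronized loop `s2'` inside the composition itself: the pumped sequence is again a
run of `CC(S, S)` from `q0'` to `q2'`. Its left and right projections are then two runs of `S`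
from initial states with the same output, ending in the distinct states `q2'.1` and `q2'.2`; and
the output has length at least `k + 1`, since each copy of `s2'` contributes a nonempty output.
-/

namespace LFSA

variable {Q Q1 Q2 E A : Type*}

theorem Run.append {S : LFSA Q E A} {q q' q'' : Q} {s t : List E}
    (h₁ : S.Run q s q') (h₂ : S.Run q' t q'') : S.Run q (s ++ t) q'' := by
  induction h₁ with
  | nil => exact h₂
  | cons hd _ ih => exact Run.cons hd (ih h₂)

theorem Run.flatten_replicate {S : LFSA Q E A} {q : Q} {s : List E} (h : S.Run q s q) (n : ℕ) :
    S.Run q (List.replicate n s).flatten q := by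
  induction n with
  | zero => exact Run.nil q
  | succ n ih => simpa only [List.replicate_succ, List.flatten_cons] using h.append ih

theorem lt_length_out_pump (S : LFSA Q E A) {s₂ : List E} (h : S.out s₂ ≠ []) (k : ℕ)
    (s₁ s₃ : List E) :
    k < (S.out (s₁ ++ (List.replicate (k + 1) s₂).flatten ++ s₃)).length := by
  have hpos : 0 < (S.out s₂).length := List.length_pos_iff.mpr h
  have hle : k + 1 ≤ (k + 1) * (S.out s₂).length := Nat.le_mul_of_pos_right _ hpos
  simp only [out, List.filterMap_append, List.filterMap_flatten, List.map_replicate,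
    List.length_append, List.length_flatten, List.sum_replicate, smul_eq_mul] at hle ⊢
  omega

theorem lproj_pump (s₁ s₂ s₃ : List (Option E × Option E)) (n : ℕ) :
    lproj (s₁ ++ (List.replicate n s₂).flatten ++ s₃) =
      lproj s₁ ++ (List.replicate n (lproj s₂)).flatten ++ lproj s₃ := by
  simp only [lproj, List.filterMap_append, List.filterMap_flatten, List.map_replicate]

theorem out_lproj (S₁ : LFSA Q1 E A) (S₂ : LFSA Q2 E A) (s : List (Option E × Option E)) :
    S₁.out (lproj s) = (S₁.CC S₂).out s := by
  simp only [out, lproj, List.filterMap_filterMap]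
  rfl

section Projections

variable {S₁ : LFSA Q1 E A} {S₂ : LFSA Q2 E A} {p p' : Q1 × Q2} {s : List (Option E × Option E)}

theorem Run.CC_fst (h : (S₁.CC S₂).Run p s p') : S₁.Run p.1 (lproj s) p'.1 := by
  induction h with
  | nil => exact Run.nil _
  | @cons _ _ _ ev _ hd _ ih =>
    match ev, hd with
    | (some _, some _), ⟨_, hd₁, _⟩ => exact Run.cons hd₁ ih
    | (some _, none), ⟨_, hd₁, _⟩ => exact Run.cons hd₁ ih
    | (none, some _), ⟨_, heq, _⟩ => simpa only [lproj, List.filterMap_cons, heq] using ih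

theorem Run.CC_snd (h : (S₁.CC S₂).Run p s p') : S₂.Run p.2 (rproj s) p'.2 := by
  induction h with
  | nil => exact Run.nil _
  | @cons _ _ _ ev _ hd _ ih =>
    match ev, hd with
    | (some _, some _), ⟨_, _, hd₂⟩ => exact Run.cons hd₂ ih
    | (some _, none), ⟨_, _, heq⟩ => simpa only [rproj, List.filterMap_cons, heq] using ih
    | (none, some _), ⟨_, _, hd₂⟩ => exact Run.cons hd₂ ih

/-- `CC` labels an event by its left component; synchronization makes the right component
produce the same labels. -/
theorem Run.out_rproj_CC (h : (S₁.CC S₂).Run p s p') :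
    S₂.out (rproj s) = (S₁.CC S₂).out s := by
  induction h with
  | nil => rfl
  | @cons _ _ _ ev _ hd _ ih =>
    match ev, hd with
    | (some _, some _), ⟨⟨_, ha₁, ha₂⟩, _⟩ =>
      simp only [out, rproj, CC, List.filterMap_cons, ha₁, ha₂, Option.bind_some] at ih ⊢
      rw [ih]
    | (some _, none), ⟨ha₁, _⟩ =>
      simpa only [out, rproj, CC, List.filterMap_cons, ha₁, Option.bind_some] using ih
    | (none, some _), ⟨ha₂, _⟩ =>
      simpa only [out, rproj, CC, List.filterMap_cons, ha₂, Option.bind_none] using ih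

end Projections

end LFSA

/-- the pumped event sequence witnesses non-detectability for every `k`. -/
theorem stmt3 {Q E A : Type*} (S : LFSA Q E A)
    (q0' q1' q2' : Q × Q) (s1' s2' s3' : List (Option E × Option E))
    (h0 : q0' ∈ (S.CC S).Q0)
    (h1 : (S.CC S).Run q0' s1' q1') (h2 : (S.CC S).Run q1' s2' q1')
    (h3 : (S.CC S).Run q1' s3' q2')
    (hσ : (S.CC S).out s2' ≠ []) (hne : q2'.1 ≠ q2'.2) :
    ∀ k : ℕ, 0 < k →
      (LFSA.lproj s1' ++ (List.replicate (k + 1) (LFSA.lproj s2')).flatten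
          ++ LFSA.lproj s3') ∈ S.L ∧
      k < (S.out (LFSA.lproj s1' ++ (List.replicate (k + 1) (LFSA.lproj s2')).flatten
          ++ LFSA.lproj s3')).length ∧
      ∃ qa ∈ S.M (S.out (LFSA.lproj s1' ++ (List.replicate (k + 1) (LFSA.lproj s2')).flatten
          ++ LFSA.lproj s3')),
        ∃ qb ∈ S.M (S.out (LFSA.lproj s1' ++ (List.replicate (k + 1) (LFSA.lproj s2')).flatten
          ++ LFSA.lproj s3')), qa ≠ qb := by
  intro k _
  rw [← LFSA.lproj_pump]
  set s' := s1' ++ (List.replicate (k + 1) s2').flatten ++ s3'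
  have hrun : (S.CC S).Run q0' s' q2' := (h1.append (h2.flatten_replicate (k + 1))).append h3
  have hout : S.out (LFSA.rproj s') = S.out (LFSA.lproj s') := by
    rw [hrun.out_rproj_CC, LFSA.out_lproj]
  refine ⟨⟨q0'.1, h0.1, q2'.1, hrun.CC_fst⟩, ?_, q2'.1, ⟨q0'.1, h0.1, _, rfl, hrun.CC_fst⟩,
    q2'.2, ⟨q0'.2, h0.2, _, hout, hrun.CC_snd⟩, hne⟩
  rw [LFSA.out_lproj]
  exact (S.CC S).lt_length_out_pump hσ k s1' s3'
end

section
/- An LFSA S is initial-state opaque with respect to Q_S if and only if (Q0 ≠ ∅ implies Q0 ⊄ Q_S) and for every secret initial state q0 ∈ Q0 ∩ Q_S, all states reachable in the concurrent composition CC(S_ε, S_obs^ε) from (q0, UR(Q0 \ Q_S)) have nonempty right component. -/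
/-!
A run of `CC(S_ε, S_obs^ε)` from `(q0, X)` is just a run `q0 →s q` of `S` paired with the
observer state reached from `X` on `ℓ(s)`, and the observer started at `UR(X)` reaches exactly the
states to which some run from `X` leads with the same observation. So the right component stays
nonempty along every run from a secret initial state iff every such run has an observationally
equal run from a non-secret initial state, which is initial-state opacity.
-/

namespace LFSA

variable {Q E A : Type*}

-- `S.UR X` is `S.estimate X []` on the nose, and `S.M σ` is `S.estimate S.Q0 σ`.
def estimate (S : LFSA Q E A) (X : Set Q) (σ : List A) : Set Q :=
  {q | ∃ q0 ∈ X, ∃ s : List E, S.out s = σ ∧ S.Run q0 s q}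

variable {S : LFSA Q E A}

theorem run_append_iff {q q'' : Q} {s t : List E} :
    S.Run q (s ++ t) q'' ↔ ∃ q', S.Run q s q' ∧ S.Run q' t q'' := by
  induction s generalizing q with
  | nil => exact ⟨fun h => ⟨q, .nil q, h⟩, fun ⟨_, .nil _, h⟩ => h⟩
  | cons e s ih =>
    constructor
    · rintro (_ | ⟨hδ, hr⟩)
      obtain ⟨q', h1, h2⟩ := ih.1 hr
      exact ⟨q', .cons hδ h1, h2⟩
    · rintro ⟨q', (_ | ⟨hδ, hr⟩), h⟩
      exact .cons hδ (ih.2 ⟨q', hr, h⟩)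

theorem out_append (s t : List E) : S.out (s ++ t) = S.out s ++ S.out t :=
  List.filterMap_append

theorem out_eq_append_singleton_iff {s : List E} {σ : List A} {a : A} :
    S.out s = σ ++ [a] ↔ ∃ s₁ e s₂, s = s₁ ++ e :: s₂ ∧ S.out s₁ = σ ∧ S.lab e = some a ∧
      S.out s₂ = [] := by
  constructor
  · intro h
    obtain ⟨l₁, l₂, rfl, h₁, h₂⟩ := List.filterMap_eq_append_iff.1 h
    obtain ⟨m, e, s₂, rfl, hm, he, hs₂⟩ := List.filterMap_eq_cons_iff.1 h₂
    refine ⟨l₁ ++ m, e, s₂, by simp, ?_, he, hs₂⟩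
    rw [out_append, show S.out l₁ = σ from h₁, show S.out m = [] from
      List.filterMap_eq_nil_iff.2 hm, List.append_nil]
  · rintro ⟨s₁, e, s₂, rfl, h₁, he, h₂⟩
    rw [out_append, h₁]
    simp [out, he, ← h₂]

theorem obsStep_estimate (X : Set Q) (σ : List A) (a : A) :
    S.obsStep (S.estimate X σ) a = S.estimate X (σ ++ [a]) := by
  ext q'
  constructor
  · rintro ⟨q, ⟨q0, hq0, s, rfl, hs⟩, e, p, he, hδ, _, rfl, t, ht, hp⟩
    refine ⟨q0, hq0, s ++ e :: t, out_eq_append_singleton_iff.2 ⟨s, e, t, rfl, rfl, he, ht⟩,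
      run_append_iff.2 ⟨q, hs, .cons hδ hp⟩⟩
  · rintro ⟨q0, hq0, s, hσ, hs⟩
    obtain ⟨s₁, e, s₂, rfl, h₁, he, h₂⟩ := out_eq_append_singleton_iff.1 hσ
    obtain ⟨q, hs₁, _ | ⟨hδ, hs₂⟩⟩ := run_append_iff.1 hs
    exact ⟨q, ⟨q0, hq0, s₁, h₁, hs₁⟩, e, _, he, hδ, _, rfl, s₂, h₂, hs₂⟩

theorem obsRun_estimate (X : Set Q) (τ σ : List A) :
    S.obsRun (S.estimate X τ) σ = S.estimate X (τ ++ σ) := by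
  induction σ generalizing τ with
  | nil => simp [obsRun]
  | cons a σ ih =>
    change S.obsRun (S.obsStep (S.estimate X τ) a) σ = _
    rw [obsStep_estimate, ih, List.append_assoc, List.singleton_append]

theorem obsRun_UR (X : Set Q) (σ : List A) : S.obsRun (S.UR X) σ = S.estimate X σ :=
  obsRun_estimate X [] σ

theorem CCObs_δ_iff {ostep : Set Q → A → Set Q} {x0 : Set Q} {p p' : Q × Set Q} {e : E} :
    (S.CCObs ostep x0).δ p e p' ↔ S.δ p.1 e p'.1 ∧ p'.2 = (S.out [e]).foldl ostep p.2 := by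
  rcases he : S.lab e with _ | a <;> simp [CCObs, out, he, eq_comm]

theorem run_CCObs_iff {ostep : Set Q → A → Set Q} {x0 : Set Q} {q q' : Q} {X X' : Set Q}
    {s : List E} :
    (S.CCObs ostep x0).Run (q, X) s (q', X') ↔
      S.Run q s q' ∧ X' = (S.out s).foldl ostep X := by
  induction s generalizing q X with
  | nil =>
    constructor
    · rintro (_ | _)
      exact ⟨.nil _, rfl⟩
    · rintro ⟨_ | _, rfl⟩
      exact .nil _
  | cons e s ih =>
    have hout : S.out (e :: s) = S.out [e] ++ S.out s := out_append [e] s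
    rw [hout, List.foldl_append]
    constructor
    · rintro (_ | @⟨_, ⟨r, Y⟩, _, _, _, hδ, hr⟩)
      obtain ⟨hδ, rfl⟩ := CCObs_δ_iff.1 hδ
      obtain ⟨hrun, rfl⟩ := ih.1 hr
      exact ⟨.cons hδ hrun, rfl⟩
    · rintro ⟨_ | ⟨hδ, hr⟩, rfl⟩
      exact .cons (CCObs_δ_iff.2 ⟨hδ, rfl⟩) (ih.2 ⟨hr, rfl⟩)

theorem iso_iff_estimate_nonempty (QS : Set Q) :
    S.ISO QS ↔ ∀ q0 ∈ S.Q0 ∩ QS, ∀ (s : List E) (q : Q), S.Run q0 s q →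
      (S.estimate (S.Q0 \ QS) (S.out s)).Nonempty := by
  refine forall₂_congr fun q0 _ => forall₃_congr fun s q _ => ⟨?_, ?_⟩
  · rintro ⟨q0', hq0', s', q', hs', hσ⟩
    exact ⟨q', q0', hq0', s', hσ.symm, hs'⟩
  · rintro ⟨q', q0', hq0', s', hσ, hs'⟩
    exact ⟨q0', hq0', s', q', hs', hσ.symm⟩

end LFSA

/-- concurrent-composition characterization of initial-state opacity. -/
theorem stmt9 {Q E A : Type*} (S : LFSA Q E A) (QS : Set Q) :
    S.ISO QS ↔
      ((S.Q0.Nonempty → ¬ S.Q0 ⊆ QS) ∧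
        ∀ q0 ∈ S.Q0 ∩ QS, ∀ (s : List E) (p : Q × Set Q),
          (S.CCObs S.obsStep (S.UR S.Q0)).Run (q0, S.UR (S.Q0 \ QS)) s p →
            p.2.Nonempty) := by
  have hCC : ∀ q0 s (p : Q × Set Q),
      (S.CCObs S.obsStep (S.UR S.Q0)).Run (q0, S.UR (S.Q0 \ QS)) s p ↔
        S.Run q0 s p.1 ∧ p.2 = S.estimate (S.Q0 \ QS) (S.out s) := by
    rintro q0 s ⟨q, X⟩
    rw [LFSA.run_CCObs_iff, ← LFSA.obsRun_UR]
    rfl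
  simp only [hCC, LFSA.iso_iff_estimate_nonempty]
  constructor
  · intro h
    refine ⟨fun ⟨q0, hq0⟩ hsub => ?_, ?_⟩
    · obtain ⟨_, q0', hq0', -⟩ := h q0 ⟨hq0, hsub hq0⟩ [] q0 (.nil q0)
      exact hq0'.2 (hsub hq0'.1)
    · rintro q0 hq0 s ⟨q, X⟩ ⟨hs, rfl⟩
      exact h q0 hq0 s q hs
  · rintro ⟨-, h⟩ q0 hq0 s q hs
    exact h q0 hq0 s (q, _) ⟨hs, rfl⟩
end
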